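/- (Equivalence of the conformal-factor equation with the scalar field equation.) Let ħ > 0, q, m real with m > 0, a₀ > 0 a constant, ε ∈ {−1, 0, 1}. Let g₀ be a smooth field of symmetric invertible real 4×4 matrices on ℝ⁴, Ω a smooth function with Ω² > 0 everywhere, g := Ω² g₀ and g_E := (a/a₀) g₀, and set α := m (Ω² a₀/a)^{1/2}. Then Ω satisfies −(ħ²/2) □_g ln|Ω²/a| + (ħ²/4) g^{μν} ∂_μ ln|Ω²/a| ∂_ν ln|Ω²/a| − Ω⁻² [ ε m² + q²/(β² a²) ] = −m² on ℝ⁴ if and only if α satisfies ħ² □_{g_E} α + (a₀/a) [ ε m² + q²/(β² a²) ] α − α³ = 0 on ℝ⁴. -/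

import Mathlib

open scoped BigOperators

/-- Partial derivative in the μ-th coordinate direction. -/
noncomputable def pd {ι : Type*} [Fintype ι] [DecidableEq ι] {F : Type*}
    [NormedAddCommGroup F] [NormedSpace ℝ F]
    (f : (ι → ℝ) → F) (μ : ι) (x : ι → ℝ) : F :=
  fderiv ℝ f x (Pi.single μ 1)

/-- Coordinate d'Alembertian: □_h f = |det h|^{−1/2} ∂_μ( |det h|^{1/2} h^{μν} ∂_ν f ). -/
noncomputable def box {ι : Type*} [Fintype ι] [DecidableEq ι] {F : Type*}
    [NormedAddCommGroup F] [NormedSpace ℝ F]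
    (h : (ι → ℝ) → Matrix ι ι ℝ) (f : (ι → ℝ) → F) (x : ι → ℝ) : F :=
  (Real.sqrt |(h x).det|)⁻¹ •
    ∑ μ : ι, pd (fun z => ∑ ν : ι, (Real.sqrt |(h z).det| * (h z)⁻¹ μ ν) • pd f ν z) μ x

/-- The function ln|Ω²/a|. -/
noncomputable def lnOa (Ω a : (Fin 4 → ℝ) → ℝ) (z : Fin 4 → ℝ) : ℝ :=
  Real.log |(Ω z)^2 / a z|

/-! Write `L = ln(Ω²/a)`, so that `Ω² = a e^L` and `α = m √a₀ e^{L/2}`; in particular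
`∂α = (α/2) ∂L`. Both `g = Ω² g₀` and `g_E = (a/a₀) g₀` are conformal to `g₀`, and in dimension
four `□_{c g₀} f = (c² s)⁻¹ ∂_μ (c s g₀^{μν} ∂_ν f)` with `s = √|det g₀|`. Hence both
d'Alembertians are expressed through the same two quantities `∂_μ (a w^μ)` and `w^μ ∂_μ L`,
where `w^μ = s g₀^{μν} ∂_ν L`. Pointwise, the scalar-field expression is then `-a₀ α Ω²/a`
times (the conformal-factor expression `+ m²`), and this factor never vanishes. -/

open Real
open scoped ContDiff

section PartialDerivative

variable {ι : Type*} [Fintype ι] [DecidableEq ι] {f g : (ι → ℝ) → ℝ} {x : ι → ℝ}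

lemma HasFDerivAt.pd_eq {f' : (ι → ℝ) →L[ℝ] ℝ} (h : HasFDerivAt f f' x) (μ : ι) :
    pd f μ x = f' (Pi.single μ 1) := by
  rw [pd, h.fderiv]

lemma pd_const_mul (c : ℝ) (μ : ι) : pd (fun z => c * f z) μ x = c * pd f μ x := by
  simp only [pd, ← smul_eq_mul, ← Pi.smul_def, fderiv_const_smul_field]
  rfl

lemma pd_mul (hf : DifferentiableAt ℝ f x) (hg : DifferentiableAt ℝ g x) (μ : ι) :
    pd (fun z => f z * g z) μ x = pd f μ x * g x + f x * pd g μ x := by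
  rw [(hf.hasFDerivAt.fun_mul hg.hasFDerivAt).pd_eq, pd, pd]
  simp only [add_apply, smul_apply, smul_eq_mul]
  ring

lemma pd_exp_mul (hf : DifferentiableAt ℝ f x) (t : ℝ) (μ : ι) :
    pd (fun z => exp (t * f z)) μ x = t * exp (t * f x) * pd f μ x := by
  rw [((hf.hasFDerivAt.const_mul t).exp).pd_eq, pd]
  simp only [smul_apply, smul_eq_mul]
  ring

lemma pd_mul_exp_mul {b w : (ι → ℝ) → ℝ} (hb : DifferentiableAt ℝ b x)
    (hf : DifferentiableAt ℝ f x) (hw : DifferentiableAt ℝ w x) (t : ℝ) (μ : ι) :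
    pd (fun z => b z * exp (t * f z) * w z) μ x
      = exp (t * f x) * (pd (fun z => b z * w z) μ x + t * b x * w x * pd f μ x) := by
  have hexp : DifferentiableAt ℝ (fun z => exp (t * f z)) x := (hf.const_mul t).exp
  have hreorder : (fun z => b z * exp (t * f z) * w z) = fun z => exp (t * f z) * (b z * w z) := by
    funext z
    ring
  rw [hreorder, pd_mul hexp (hb.fun_mul hw), pd_exp_mul hf]
  ring

lemma ContDiff.pd {n m : WithTop ℕ∞} (hf : ContDiff ℝ n f) (hmn : m + 1 ≤ n) (μ : ι) :
    ContDiff ℝ m (pd f μ) :=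
  (hf.fderiv_right hmn).clm_apply contDiff_const

end PartialDerivative

section MatrixCalculus

variable {ι : Type*} [Fintype ι] [DecidableEq ι] {E : Type*} [NormedAddCommGroup E]
  [NormedSpace ℝ E] {n : WithTop ℕ∞} {M : E → Matrix ι ι ℝ}

lemma contDiff_det (hM : ∀ i j, ContDiff ℝ n fun x => M x i j) :
    ContDiff ℝ n fun x => (M x).det := by
  simp only [Matrix.det_apply']
  exact ContDiff.sum fun σ _ => contDiff_const.mul (contDiff_prod fun i _ => hM _ _)

lemma contDiff_inv_apply (hM : ∀ i j, ContDiff ℝ n fun x => M x i j)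
    (hdet : ∀ x, (M x).det ≠ 0) (i j : ι) : ContDiff ℝ n fun x => (M x)⁻¹ i j := by
  simp only [Matrix.inv_def, Matrix.smul_apply, Matrix.adjugate_apply, Ring.inverse_eq_inv',
    smul_eq_mul]
  refine ((contDiff_det hM).inv hdet).mul (contDiff_det fun k l => ?_)
  by_cases hk : k = j
  · simp only [hk, Matrix.updateRow_self]
    exact contDiff_const
  · simp only [Matrix.updateRow_ne hk]
    exact hM k l

lemma contDiff_sqrt_abs_det {k : ℕ∞} (hM : ∀ i j, ContDiff ℝ k fun x => M x i j)
    (hdet : ∀ x, (M x).det ≠ 0) : ContDiff ℝ k fun x => √|(M x).det| := by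
  refine contDiff_iff_contDiffAt.mpr fun x => ContDiffAt.sqrt ?_ (abs_ne_zero.mpr (hdet x))
  exact (contDiffAt_abs (hdet x)).comp x (contDiff_det hM).contDiffAt

end MatrixCalculus

lemma Matrix.inv_smul_apply {ι K : Type*} [Fintype ι] [DecidableEq ι] [Field K]
    {M : Matrix ι ι K} (hM : IsUnit M.det) {c : K} (hc : c ≠ 0) (i j : ι) :
    (c • M)⁻¹ i j = c⁻¹ * M⁻¹ i j := by
  have : Invertible c := invertibleOfNonzero hc
  rw [M.inv_smul c hM, invOf_eq_inv]
  rfl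

noncomputable def densitizedGradient {ι : Type*} [Fintype ι] [DecidableEq ι]
    (g : (ι → ℝ) → Matrix ι ι ℝ) (L : (ι → ℝ) → ℝ) (μ : ι) (z : ι → ℝ) : ℝ :=
  √|(g z).det| * ∑ ν, (g z)⁻¹ μ ν * pd L ν z

section DensitizedGradient

variable {ι : Type*} [Fintype ι] [DecidableEq ι] {g : (ι → ℝ) → Matrix ι ι ℝ}
  {L : (ι → ℝ) → ℝ}

lemma contDiff_densitizedGradient (hg : ∀ i j, ContDiff ℝ ∞ fun z => g z i j)
    (hdet : ∀ z, (g z).det ≠ 0) (hL : ContDiff ℝ ∞ L) (μ : ι) :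
    ContDiff ℝ ∞ (densitizedGradient g L μ) :=
  (contDiff_sqrt_abs_det hg hdet).mul
    (ContDiff.sum fun ν _ => (contDiff_inv_apply hg hdet μ ν).mul (hL.pd (by simp) ν))

lemma sum_pd_mul_exp_mul {b : (ι → ℝ) → ℝ} {x : ι → ℝ} (hb : DifferentiableAt ℝ b x)
    (hL : DifferentiableAt ℝ L x) (hw : ∀ μ, DifferentiableAt ℝ (densitizedGradient g L μ) x)
    (t : ℝ) :
    ∑ μ, pd (fun z => b z * exp (t * L z) * densitizedGradient g L μ z) μ x
      = exp (t * L x) * (∑ μ, pd (fun z => b z * densitizedGradient g L μ z) μ x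
          + t * b x * ∑ μ, densitizedGradient g L μ x * pd L μ x) := by
  simp only [pd_mul_exp_mul hb hL (hw _), Finset.mul_sum, ← Finset.sum_add_distrib]
  refine Finset.sum_congr rfl fun μ _ => ?_
  ring

lemma sum_inv_smul_mul_pd_mul_pd {x : ι → ℝ} (hg : IsUnit (g x).det) {c : ℝ} (hc : c ≠ 0) :
    ∑ μ, ∑ ν, (c • g x)⁻¹ μ ν * pd L μ x * pd L ν x
      = (c * √|(g x).det|)⁻¹ * ∑ μ, densitizedGradient g L μ x * pd L μ x := by
  have hs : √|(g x).det| ≠ 0 := (Real.sqrt_pos.mpr (abs_pos.mpr hg.ne_zero)).ne'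
  simp only [densitizedGradient, Matrix.inv_smul_apply hg hc, Finset.mul_sum, Finset.sum_mul]
  refine Finset.sum_congr rfl fun μ _ => Finset.sum_congr rfl fun ν _ => ?_
  field_simp

end DensitizedGradient

lemma sqrt_abs_det_smul (c : ℝ) (M : Matrix (Fin 4) (Fin 4) ℝ) :
    √|(c • M).det| = c ^ 2 * √|M.det| := by
  rw [Matrix.det_smul, Fintype.card_fin, abs_mul, show c ^ 4 = (c ^ 2) ^ 2 by ring,
    abs_of_nonneg (by positivity), Real.sqrt_mul (by positivity), Real.sqrt_sq (by positivity)]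

lemma box_smul_eq_sum_pd {g : (Fin 4 → ℝ) → Matrix (Fin 4) (Fin 4) ℝ}
    (hg : ∀ z, IsUnit (g z).det) {c k f L : (Fin 4 → ℝ) → ℝ} (hc : ∀ z, c z ≠ 0)
    (hf : ∀ ν z, pd f ν z = k z * pd L ν z) (x : Fin 4 → ℝ) :
    box (fun z => c z • g z) f x
      = ((c x) ^ 2 * √|(g x).det|)⁻¹ *
        ∑ μ, pd (fun z => c z * k z * densitizedGradient g L μ z) μ x := by
  rw [box, smul_eq_mul, sqrt_abs_det_smul]
  congr 1
  refine Finset.sum_congr rfl fun μ _ => congrArg (pd · μ x) (funext fun z => ?_)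
  rw [densitizedGradient, Finset.mul_sum, Finset.mul_sum]
  refine Finset.sum_congr rfl fun ν _ => ?_
  rw [sqrt_abs_det_smul, Matrix.inv_smul_apply (hg z) (hc z), hf, smul_eq_mul]
  field_simp [hc z]

section ConformalFactor

variable {g₀ : (Fin 4 → ℝ) → Matrix (Fin 4) (Fin 4) ℝ} {a Ω : (Fin 4 → ℝ) → ℝ}
  (hapos : ∀ x, 0 < a x) (hΩpos : ∀ x, 0 < (Ω x) ^ 2)
include hapos hΩpos

lemma exp_lnOa (z : Fin 4 → ℝ) : exp (lnOa Ω a z) = (Ω z) ^ 2 / a z := by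
  rw [lnOa, abs_of_pos (div_pos (hΩpos z) (hapos z)), exp_log (div_pos (hΩpos z) (hapos z))]

lemma sq_eq_mul_exp_lnOa (z : Fin 4 → ℝ) : (Ω z) ^ 2 = a z * exp (lnOa Ω a z) := by
  rw [exp_lnOa hapos hΩpos, mul_div_cancel₀ _ (hapos z).ne']

lemma sqrt_eq_mul_exp_half_lnOa {a₀ : ℝ} (ha₀ : 0 ≤ a₀) (z : Fin 4 → ℝ) :
    √((Ω z) ^ 2 * a₀ / a z) = √a₀ * exp (2⁻¹ * lnOa Ω a z) := by
  rw [← div_eq_inv_mul, exp_half, exp_lnOa hapos hΩpos, ← Real.sqrt_mul ha₀]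
  ring_nf

lemma contDiff_lnOa (ha : ContDiff ℝ ∞ a) (hΩ : ContDiff ℝ ∞ Ω) : ContDiff ℝ ∞ (lnOa Ω a) := by
  have hlog : lnOa Ω a = fun z => log ((Ω z) ^ 2 / a z) := funext fun z => log_abs _
  rw [hlog]
  exact ((hΩ.pow 2).div ha fun z => (hapos z).ne').log fun z => (div_pos (hΩpos z) (hapos z)).ne'

variable (hg : ∀ μ ν, ContDiff ℝ ∞ fun x => g₀ x μ ν) (hginv : ∀ x, IsUnit (g₀ x).det)
  (ha : ContDiff ℝ ∞ a) (hΩ : ContDiff ℝ ∞ Ω)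
include hg hginv ha hΩ

lemma differentiableAt_densitizedGradient_lnOa (μ : Fin 4) (x : Fin 4 → ℝ) :
    DifferentiableAt ℝ (densitizedGradient g₀ (lnOa Ω a) μ) x :=
  (contDiff_densitizedGradient hg (fun z => (hginv z).ne_zero)
    (contDiff_lnOa hapos hΩpos ha hΩ) μ).differentiable (by simp) x

lemma box_sq_smul_lnOa (x : Fin 4 → ℝ) :
    box (fun z => (Ω z) ^ 2 • g₀ z) (lnOa Ω a) x
      = ((a x) ^ 2 * exp (lnOa Ω a x) * √|(g₀ x).det|)⁻¹ *
        (∑ μ, pd (fun z => a z * densitizedGradient g₀ (lnOa Ω a) μ z) μ x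
          + a x * ∑ μ, densitizedGradient g₀ (lnOa Ω a) μ x * pd (lnOa Ω a) μ x) := by
  have hc : (fun z => (Ω z) ^ 2 • g₀ z) = fun z => (a z * exp (1 * lnOa Ω a z)) • g₀ z :=
    funext fun z => by rw [one_mul, sq_eq_mul_exp_lnOa hapos hΩpos z]
  have hsum := sum_pd_mul_exp_mul (ha.differentiable (by simp) x)
    ((contDiff_lnOa hapos hΩpos ha hΩ).differentiable (by simp) x)
    (differentiableAt_densitizedGradient_lnOa hapos hΩpos hg hginv ha hΩ · x) 1
  rw [hc, box_smul_eq_sum_pd hginv (k := fun _ => 1) (fun z => (by have := hapos z; positivity))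
    (fun ν z => (one_mul _).symm)]
  simp only [mul_one, hsum]
  have := (hapos x).ne'
  field_simp

lemma box_div_smul_sqrt {m a₀ : ℝ} (ha₀ : 0 < a₀) (x : Fin 4 → ℝ) :
    box (fun z => (a z / a₀) • g₀ z) (fun z => m * √((Ω z) ^ 2 * a₀ / a z)) x
      = a₀ * m * √a₀ * exp (2⁻¹ * lnOa Ω a x) / (2 * (a x) ^ 2 * √|(g₀ x).det|) *
        (∑ μ, pd (fun z => a z * densitizedGradient g₀ (lnOa Ω a) μ z) μ x
          + 2⁻¹ * a x * ∑ μ, densitizedGradient g₀ (lnOa Ω a) μ x * pd (lnOa Ω a) μ x) := by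
  have hL := (contDiff_lnOa hapos hΩpos ha hΩ).differentiable (by simp)
  have hf : (fun z => m * √((Ω z) ^ 2 * a₀ / a z))
      = fun z => m * √a₀ * exp (2⁻¹ * lnOa Ω a z) :=
    funext fun z => by rw [sqrt_eq_mul_exp_half_lnOa hapos hΩpos ha₀.le, mul_assoc]
  have hpd : ∀ ν z, pd (fun z => m * √a₀ * exp (2⁻¹ * lnOa Ω a z)) ν z
      = m * √a₀ * (2⁻¹ * exp (2⁻¹ * lnOa Ω a z)) * pd (lnOa Ω a) ν z := fun ν z => by
    rw [pd_const_mul, pd_exp_mul (hL z)]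
    ring
  have hsum := sum_pd_mul_exp_mul (ha.differentiable (by simp) x) (hL x)
    (differentiableAt_densitizedGradient_lnOa hapos hΩpos hg hginv ha hΩ · x) 2⁻¹
  rw [hf, box_smul_eq_sum_pd hginv (fun z => (by have := hapos z; positivity)) hpd]
  have hc : ∀ μ, (fun z => a z / a₀ * (m * √a₀ * (2⁻¹ * exp (2⁻¹ * lnOa Ω a z)))
        * densitizedGradient g₀ (lnOa Ω a) μ z)
      = fun z => m * √a₀ / (2 * a₀)
        * (a z * exp (2⁻¹ * lnOa Ω a z) * densitizedGradient g₀ (lnOa Ω a) μ z) :=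
    fun μ => funext fun z => by field_simp
  simp only [hc, pd_const_mul, ← Finset.mul_sum, hsum]
  have := (hapos x).ne'
  field_simp

lemma scalar_field_eq_mul_conformal_factor_add_sq (β hb q m a₀ ε : ℝ) (ha₀ : 0 < a₀)
    (x : Fin 4 → ℝ) :
    -(a₀ * (m * √((Ω x)^2 * a₀ / a x)) * ((Ω x)^2 / a x)) *
      (-(hb^2/2) * box (fun z => (Ω z)^2 • g₀ z) (lnOa Ω a) x
        + (hb^2/4) * ∑ μ : Fin 4, ∑ ν : Fin 4, ((fun z => (Ω z)^2 • g₀ z) x)⁻¹ μ ν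
            * pd (lnOa Ω a) μ x * pd (lnOa Ω a) ν x
        - ((Ω x)^2)⁻¹ * (ε * m^2 + q^2 / (β^2 * (a x)^2)) + m^2)
    = hb^2 * box (fun z => (a z / a₀) • g₀ z) (fun z => m * √((Ω z)^2 * a₀ / a z)) x
        + (a₀ / a x) * (ε * m^2 + q^2 / (β^2 * (a x)^2)) * (m * √((Ω x)^2 * a₀ / a x))
        - (m * √((Ω x)^2 * a₀ / a x))^3 := by
  rw [box_sq_smul_lnOa hapos hΩpos hg hginv ha hΩ,
    box_div_smul_sqrt hapos hΩpos hg hginv ha hΩ ha₀,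
    sum_inv_smul_mul_pd_mul_pd (hginv x) (hΩpos x).ne',
    sqrt_eq_mul_exp_half_lnOa hapos hΩpos ha₀.le, ← exp_lnOa hapos hΩpos x,
    sq_eq_mul_exp_lnOa hapos hΩpos x]
  have hexp : exp (lnOa Ω a x) = exp (2⁻¹ * lnOa Ω a x) ^ 2 := by
    rw [← exp_nat_mul]
    ring_nf
  -- with `a₀ = r²` and `e^L = (e^{L/2})²` the identity becomes rational in `r` and `e^{L/2}`
  obtain ⟨r, hr, rfl⟩ : ∃ r, 0 < r ∧ a₀ = r ^ 2 :=
    ⟨√a₀, Real.sqrt_pos.mpr ha₀, (Real.sq_sqrt ha₀.le).symm⟩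
  rw [hexp, Real.sqrt_sq hr.le]
  have := (hapos x).ne'
  have := (Real.sqrt_pos.mpr (abs_pos.mpr (hginv x).ne_zero)).ne'
  have := exp_pos (2⁻¹ * lnOa Ω a x)
  field_simp
  ring

end ConformalFactor

theorem conformal_factor_eq_iff_scalar_field_eq_general
    (g₀ : (Fin 4 → ℝ) → Matrix (Fin 4) (Fin 4) ℝ)
    (a Ω : (Fin 4 → ℝ) → ℝ) (β : ℝ)
    (hg : ∀ μ ν, ContDiff ℝ (⊤ : ℕ∞) (fun x => g₀ x μ ν))
    (hginv : ∀ x, IsUnit (g₀ x).det)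
    (ha : ContDiff ℝ (⊤ : ℕ∞) a) (hapos : ∀ x, 0 < a x)
    (hΩ : ContDiff ℝ (⊤ : ℕ∞) Ω) (hΩpos : ∀ x, 0 < (Ω x)^2)
    (hb q m a₀ ε : ℝ) (hm : 0 < m) (ha₀ : 0 < a₀) :
    (∀ x : Fin 4 → ℝ,
      -(hb^2/2) * box (fun z => (Ω z)^2 • g₀ z) (lnOa Ω a) x
        + (hb^2/4) * ∑ μ : Fin 4, ∑ ν : Fin 4, ((fun z => (Ω z)^2 • g₀ z) x)⁻¹ μ ν
            * pd (lnOa Ω a) μ x * pd (lnOa Ω a) ν x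
        - ((Ω x)^2)⁻¹ * (ε * m^2 + q^2 / (β^2 * (a x)^2)) = -(m^2)) ↔
    (∀ x : Fin 4 → ℝ,
      hb^2 * box (fun z => (a z / a₀) • g₀ z) (fun z => m * Real.sqrt ((Ω z)^2 * a₀ / a z)) x
        + (a₀ / a x) * (ε * m^2 + q^2 / (β^2 * (a x)^2))
            * (m * Real.sqrt ((Ω x)^2 * a₀ / a x))
        - (m * Real.sqrt ((Ω x)^2 * a₀ / a x))^3 = 0) := by
  refine forall_congr' fun x => ?_
  have hfactor : -(a₀ * (m * √((Ω x)^2 * a₀ / a x)) * ((Ω x)^2 / a x)) ≠ 0 := by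
    have := hapos x
    have := hΩpos x
    exact neg_ne_zero.mpr (by positivity)
  rw [← scalar_field_eq_mul_conformal_factor_add_sq hapos hΩpos hg hginv ha hΩ β hb q m a₀ ε
      ha₀ x,
    mul_eq_zero, or_iff_right hfactor, add_eq_zero_iff_eq_neg]

/-- equivalence of the conformal-factor equation with the scalar field
equation: with g = Ω²g₀, g_E = (a/a₀)g₀ and α = m(Ω²a₀/a)^{1/2}, the conformal-factor
equation for Ω holds iff α satisfies ħ² □_{g_E} α + (a₀/a)[εm² + q²/(β²a²)] α − α³ = 0. -/
theorem conformal_factor_eq_iff_scalar_field_eq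
    (g₀ : (Fin 4 → ℝ) → Matrix (Fin 4) (Fin 4) ℝ)
    (A : (Fin 4 → ℝ) → Fin 4 → ℝ) (a Ω : (Fin 4 → ℝ) → ℝ) (β : ℝ)
    (hg : ∀ μ ν, ContDiff ℝ (⊤ : ℕ∞) (fun x => g₀ x μ ν))
    (hgsymm : ∀ x, (g₀ x).IsSymm)
    (hginv : ∀ x, IsUnit (g₀ x).det)
    (hA : ∀ μ, ContDiff ℝ (⊤ : ℕ∞) (fun x => A x μ))
    (ha : ContDiff ℝ (⊤ : ℕ∞) a) (hapos : ∀ x, 0 < a x)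
    (hΩ : ContDiff ℝ (⊤ : ℕ∞) Ω) (hΩpos : ∀ x, 0 < (Ω x)^2)
    (hβ : β ≠ 0)
    (hb q m a₀ ε : ℝ) (hhb : 0 < hb) (hm : 0 < m) (ha₀ : 0 < a₀)
    (hε : ε = -1 ∨ ε = 0 ∨ ε = 1) :
    (∀ x : Fin 4 → ℝ,
      -(hb^2/2) * box (fun z => (Ω z)^2 • g₀ z) (lnOa Ω a) x
        + (hb^2/4) * ∑ μ : Fin 4, ∑ ν : Fin 4, ((fun z => (Ω z)^2 • g₀ z) x)⁻¹ μ ν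
            * pd (lnOa Ω a) μ x * pd (lnOa Ω a) ν x
        - ((Ω x)^2)⁻¹ * (ε * m^2 + q^2 / (β^2 * (a x)^2)) = -(m^2)) ↔
    (∀ x : Fin 4 → ℝ,
      hb^2 * box (fun z => (a z / a₀) • g₀ z) (fun z => m * Real.sqrt ((Ω z)^2 * a₀ / a z)) x
        + (a₀ / a x) * (ε * m^2 + q^2 / (β^2 * (a x)^2))
            * (m * Real.sqrt ((Ω x)^2 * a₀ / a x))
        - (m * Real.sqrt ((Ω x)^2 * a₀ / a x))^3 = 0) :=
  conformal_factor_eq_iff_scalar_field_eq_general g₀ a Ω β hg hginv ha hapos hΩ hΩpos hb q m a₀ ε hm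
    ha₀
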